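/- arXiv:2602.18248 — 2 statements merged into one kernel-verified Lean document; each statement's English description precedes it below -/
import Mathlib

section
/- Let T be a cluster tree of depth L ≥ 1 for {1,…,d} and let A ∈ HSS(r, T). Then for any two distinct nodes τ ≠ τ' of T of the same depth ℓ with 1 ≤ ℓ ≤ L, the off-diagonal submatrix A[I_τ × I_{τ'}] := (A_{ij})_{i ∈ I_τ, j ∈ I_{τ'}} has rank at most r. -/
/-! Hierarchical Semi-Separable (HSS) matrices, following Definition 3.1 of the paper. -/

/-- The re-indexing identifying the `2^(L+1)` blocks of size `r` (indexed by
`Fin (2^(L+1)) × Fin r`) with the `2^L` blocks of size `2r` of the balanced cluster tree that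
is one level coarser: leaves `2q` and `2q+1` are merged (in order) into the leaf `q`. -/
def childEquiv (L r : ℕ) : (Fin (2 ^ (L + 1)) × Fin r) ≃ (Fin (2 ^ L) × Fin (2 * r)) :=
  (Equiv.prodCongr ((finCongr (pow_succ 2 L)).trans finProdFinEquiv.symm)
      (Equiv.refl (Fin r))).trans
    ((Equiv.prodAssoc (Fin (2 ^ L)) (Fin 2) (Fin r)).trans
      (Equiv.prodCongr (Equiv.refl (Fin (2 ^ L))) finProdFinEquiv))

/-- Given a matrix `A` with `n` diagonal blocks of size `s`, and per-block data `U, V, D`,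
this is the compressed matrix `A' = Uᵀ (A - D) V` (blockwise), of block size `r`. -/
noncomputable def teleSmall (r s n : ℕ)
    (A : Matrix (Fin n × Fin s) (Fin n × Fin s) ℝ)
    (U V : Fin n → Matrix (Fin s) (Fin r) ℝ)
    (Dm : Fin n → Matrix (Fin s) (Fin s) ℝ) :
    Matrix (Fin n × Fin r) (Fin n × Fin r) ℝ :=
  Matrix.of fun p q => ∑ i : Fin s, ∑ j : Fin s,
    U p.1 i p.2 * (A (p.1, i) (q.1, j) - if p.1 = q.1 then Dm p.1 i j else 0) * V q.1 j q.2

/-- Telescopic (HSS) decomposability with rank `r` for a matrix indexed by the balanced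
cluster tree of depth `L` whose `2^L` leaves all have size `s`.
For `L = 0` the matrix is just the root diagonal block `D`, so there is no condition;
for `L ≥ 1` we require block-diagonal `U, V, D` (one block per leaf) such that,
with `A' := Uᵀ (A - D) V`, we have `A = D + U A' Vᵀ` and `A'` (viewed on the balanced
cluster tree of depth `L - 1` with leaves of size `2r`) is again telescopically
decomposable with rank `r`. -/
def IsHSSc : (L : ℕ) → (r s : ℕ) →
    Matrix (Fin (2 ^ L) × Fin s) (Fin (2 ^ L) × Fin s) ℝ → Prop
  | 0, _, _, _ => True
  | (L + 1), r, s, A =>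
    ∃ (U V : Fin (2 ^ (L + 1)) → Matrix (Fin s) (Fin r) ℝ)
      (Dm : Fin (2 ^ (L + 1)) → Matrix (Fin s) (Fin s) ℝ),
      (∀ p q, A p q = (if p.1 = q.1 then Dm p.1 p.2 q.2 else 0)
          + ∑ a : Fin r, ∑ b : Fin r,
              U p.1 p.2 a * teleSmall r s (2 ^ (L + 1)) A U V Dm (p.1, a) (q.1, b)
                * V q.1 q.2 b)
      ∧ IsHSSc L r (2 * r)
          (Matrix.of fun p q =>
            teleSmall r s (2 ^ (L + 1)) A U V Dm
              ((childEquiv L r).symm p) ((childEquiv L r).symm q))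

/-- The compressed matrix `A' = Uᵀ (A - D) V` at the top level of a cluster tree whose
`2^L` leaves have (possibly different) sizes `sizes t`. -/
noncomputable def teleTop (L r : ℕ) (sizes : Fin (2 ^ L) → ℕ)
    (A : Matrix ((t : Fin (2 ^ L)) × Fin (sizes t)) ((t : Fin (2 ^ L)) × Fin (sizes t)) ℝ)
    (U V : ∀ t, Matrix (Fin (sizes t)) (Fin r) ℝ)
    (Dm : ∀ t, Matrix (Fin (sizes t)) (Fin (sizes t)) ℝ) :
    Matrix (Fin (2 ^ L) × Fin r) (Fin (2 ^ L) × Fin r) ℝ :=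
  Matrix.of fun p q => ∑ i : Fin (sizes p.1), ∑ j : Fin (sizes q.1),
    U p.1 i p.2 *
      (A ⟨p.1, i⟩ ⟨q.1, j⟩ -
        if h : p.1 = q.1 then Dm p.1 i (Fin.cast (congrArg sizes h.symm) j) else 0) *
      V q.1 j q.2

/-- Telescopic (HSS) decomposability with rank `r` for a matrix indexed by the leaves
(of sizes `sizes t`) of a cluster tree of depth `L`, as in Definition 3.1:
`A = D^(L) + U^(L) A^(L-1) (V^(L))ᵀ` with `A^(L-1) := (U^(L))ᵀ (A - D^(L)) V^(L)`
admitting a telescopic decomposition on the balanced cluster tree of depth `L-1`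
whose leaves have size `2r`. -/
def IsHSSSigma : (L : ℕ) → (r : ℕ) → (sizes : Fin (2 ^ L) → ℕ) →
    Matrix ((t : Fin (2 ^ L)) × Fin (sizes t)) ((t : Fin (2 ^ L)) × Fin (sizes t)) ℝ → Prop
  | 0, _, _, _ => True
  | (L + 1), r, sizes, A =>
    ∃ (U V : ∀ t, Matrix (Fin (sizes t)) (Fin r) ℝ)
      (Dm : ∀ t, Matrix (Fin (sizes t)) (Fin (sizes t)) ℝ),
      (∀ p q, A p q =
          (if h : p.1 = q.1 then Dm p.1 p.2 (Fin.cast (congrArg sizes h.symm) q.2) else 0)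
          + ∑ a : Fin r, ∑ b : Fin r,
              U p.1 p.2 a * teleTop (L + 1) r sizes A U V Dm (p.1, a) (q.1, b)
                * V q.1 q.2 b)
      ∧ IsHSSc L r (2 * r)
          (Matrix.of fun p q =>
            teleTop (L + 1) r sizes A U V Dm
              ((childEquiv L r).symm p) ((childEquiv L r).symm q))

/-- A cluster tree of depth `L` for the indices `{1, …, d}`: a perfect binary tree of
depth `L` whose nodes are consecutive intervals of indices.  Such a tree is uniquely
determined by the sizes of its `2^L` leaves (in index order). -/
structure ClusterTree (d L : ℕ) where
  sizes : Fin (2 ^ L) → ℕ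
  total : ∑ i, sizes i = d

/-- The (unique) order isomorphism between the lexicographically ordered pairs
(leaf, position inside the leaf) and `Fin d`; each leaf corresponds to a consecutive
interval of `{1, …, d}`, in order. -/
noncomputable def ClusterTree.idx {d L : ℕ} (T : ClusterTree d L) :
    (Σₗ t : Fin (2 ^ L), Fin (T.sizes t)) ≃o Fin d :=
  (monoEquivOfFin (Σₗ t : Fin (2 ^ L), Fin (T.sizes t))
    (by simp [Fintype.card_lex, Fintype.card_sigma, T.total])).symm

/-- `A ∈ HSS(r, T)`: the matrix `A ∈ ℝ^{d×d}`, re-indexed by the leaves of the cluster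
tree `T`, admits a telescopic decomposition with rank parameter `r`. -/
def MemHSS {d L : ℕ} (r : ℕ) (T : ClusterTree d L) (A : Matrix (Fin d) (Fin d) ℝ) : Prop :=
  IsHSSSigma L r T.sizes
    (Matrix.of fun p q => A (T.idx (toLex p)) (T.idx (toLex q)))


/-- The set of indices of `Fin d` belonging to the node of the cluster tree `T` at depth
`ℓ` with (in-order) position `n`: a node at depth `ℓ` consists of the leaves
`t` with `t / 2^(L-ℓ) = n`. -/
def nodeIdx {d L : ℕ} (T : ClusterTree d L) (ℓ : ℕ) (n : Fin (2 ^ ℓ)) (x : Fin d) : Prop :=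
  ((ofLex (T.idx.symm x)).1 : ℕ) / 2 ^ (L - ℓ) = (n : ℕ)

noncomputable instance {d L : ℕ} (T : ClusterTree d L) (ℓ : ℕ) (n : Fin (2 ^ ℓ)) :
    DecidablePred (nodeIdx T ℓ n) := fun x => by unfold nodeIdx; infer_instance

lemma collapse {α : Type*} [Fintype α] [DecidableEq α] (c : α) (f : α → ℝ) :
    ∑ x, (if c = x then f x else 0) = f c := by simp

lemma rank_le_of_factor {m n m' n' : Type*} [Fintype m] [Fintype n] [Fintype m'] [Fintype n']
    [DecidableEq m'] [DecidableEq n'] {r : ℕ}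
    (M : Matrix m n ℝ) (N : Matrix m' n' ℝ)
    (U : m → Fin r → ℝ) (V : n → Fin r → ℝ) (φ : m → Fin r → m') (ψ : n → Fin r → n')
    (h : ∀ p q, M p q = ∑ a, ∑ b, U p a * N (φ p a) (ψ q b) * V q b) :
    M.rank ≤ N.rank := by
  set B : Matrix m m' ℝ := Matrix.of fun p x => ∑ a, if φ p a = x then U p a else 0 with hB
  set E : Matrix n' n ℝ := Matrix.of fun y q => ∑ b, if ψ q b = y then V q b else 0 with hE
  have key2 : ∀ x q, (N * E) x q = ∑ b, N x (ψ q b) * V q b := by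
    intro x q
    rw [Matrix.mul_apply]
    simp only [hE, Matrix.of_apply, Finset.mul_sum, mul_ite, mul_zero]
    conv_lhs => rw [Finset.sum_comm]
    exact Finset.sum_congr rfl fun b _ => collapse (ψ q b) (fun y => N x y * V q b)
  have hM : M = B * (N * E) := by
    ext p q
    rw [h p q, Matrix.mul_apply]
    simp only [key2]
    simp only [hB, Matrix.of_apply, Finset.sum_mul, ite_mul, zero_mul]
    conv_rhs => rw [Finset.sum_comm]
    refine Finset.sum_congr rfl fun a _ => ?_
    rw [collapse (φ p a) (fun x => U p a * ∑ b, N x (ψ q b) * V q b)]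
    rw [Finset.mul_sum]
    exact Finset.sum_congr rfl fun b _ => by ring
  calc M.rank = (B * (N * E)).rank := by rw [hM]
    _ ≤ (N * E).rank := Matrix.rank_mul_le_right _ _
    _ ≤ N.rank := Matrix.rank_mul_le_left _ _

lemma childEquiv_fst (L r : ℕ) (t : Fin (2 ^ (L + 1))) (a : Fin r) :
    (((childEquiv L r) (t, a)).1 : ℕ) = (t : ℕ) / 2 := rfl

lemma hssc_direct (L r s e : ℕ) (he : 2 ^ e = 1)
    (A : Matrix (Fin (2 ^ (L + 1)) × Fin s) (Fin (2 ^ (L + 1)) × Fin s) ℝ)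
    (hA : IsHSSc (L + 1) r s A) (n n' : Fin (2 ^ (L + 1))) (hnn' : n ≠ n') :
    (Matrix.of fun (p : {p : Fin (2 ^ (L + 1)) × Fin s // (p.1 : ℕ) / 2 ^ e = (n : ℕ)})
      (q : {q : Fin (2 ^ (L + 1)) × Fin s // (q.1 : ℕ) / 2 ^ e = (n' : ℕ)}) =>
        A p.1 q.1).rank ≤ r := by
  obtain ⟨U, V, Dm, h1, -⟩ := hA
  have hp : ∀ p : {p : Fin (2 ^ (L + 1)) × Fin s // (p.1 : ℕ) / 2 ^ e = (n : ℕ)},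
      p.1.1 = n := by rintro ⟨⟨t, i⟩, hp⟩; exact Fin.ext (by rwa [he, Nat.div_one] at hp)
  have hq : ∀ q : {q : Fin (2 ^ (L + 1)) × Fin s // (q.1 : ℕ) / 2 ^ e = (n' : ℕ)},
      q.1.1 = n' := by rintro ⟨⟨t, i⟩, hq⟩; exact Fin.ext (by rwa [he, Nat.div_one] at hq)
  refine le_trans (rank_le_of_factor _
      (Matrix.of fun (a b : Fin r) => teleSmall r s (2 ^ (L + 1)) A U V Dm (n, a) (n', b))
      (fun p a => U n p.1.2 a) (fun q b => V n' q.1.2 b) (fun _ a => a) (fun _ b => b) ?_)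
    (le_trans (Matrix.rank_le_card_width _) (by simp))
  intro p q
  have h1' := h1 p.1 q.1
  rw [if_neg (by rw [hp p, hq q]; exact hnn'), zero_add] at h1'
  simp only [Matrix.of_apply]
  rw [h1', hp p, hq q]

lemma hssc_offdiag (L : ℕ) : ∀ (r s : ℕ)
    (A : Matrix (Fin (2 ^ (L + 1)) × Fin s) (Fin (2 ^ (L + 1)) × Fin s) ℝ),
    IsHSSc (L + 1) r s A → ∀ (ℓ : ℕ), 1 ≤ ℓ → ℓ ≤ L + 1 → ∀ (n n' : Fin (2 ^ ℓ)), n ≠ n' →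
    (Matrix.of fun
      (p : {p : Fin (2 ^ (L + 1)) × Fin s // (p.1 : ℕ) / 2 ^ (L + 1 - ℓ) = (n : ℕ)})
      (q : {q : Fin (2 ^ (L + 1)) × Fin s // (q.1 : ℕ) / 2 ^ (L + 1 - ℓ) = (n' : ℕ)}) =>
        A p.1 q.1).rank ≤ r := by
  induction L with
  | zero =>
    intro r s A hA ℓ hℓ1 hℓ2 n n' hnn'
    obtain rfl : ℓ = 1 := le_antisymm hℓ2 hℓ1
    exact hssc_direct 0 r s _ (by simp) A hA n n' hnn'
  | succ K IH =>
    intro r s A hA ℓ hℓ1 hℓ2 n n' hnn'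
    rcases eq_or_lt_of_le hℓ2 with hcase | hcase
    · obtain rfl : ℓ = K + 1 + 1 := hcase
      exact hssc_direct (K + 1) r s _ (by simp) A hA n n' hnn'
    · have hℓK : ℓ ≤ K + 1 := by omega
      obtain ⟨U, V, Dm, h1, h2⟩ := hA
      set A'' : Matrix (Fin (2 ^ (K + 1)) × Fin (2 * r)) (Fin (2 ^ (K + 1)) × Fin (2 * r)) ℝ :=
        Matrix.of fun p q => teleSmall r s (2 ^ (K + 1 + 1)) A U V Dm
          ((childEquiv (K + 1) r).symm p) ((childEquiv (K + 1) r).symm q) with hA''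
      have hdiv : ∀ (t : Fin (2 ^ (K + 1 + 1))) (a : Fin r) (m : Fin (2 ^ ℓ)),
          (t : ℕ) / 2 ^ (K + 1 + 1 - ℓ) = (m : ℕ) →
          (((childEquiv (K + 1) r) (t, a)).1 : ℕ) / 2 ^ (K + 1 - ℓ) = (m : ℕ) := by
        intro t a m hm
        rw [childEquiv_fst, Nat.div_div_eq_div_mul, ← pow_succ']
        rw [show (K + 1 - ℓ) + 1 = K + 1 + 1 - ℓ by omega]
        exact hm
      refine le_trans (rank_le_of_factor _
        (Matrix.of fun
          (x : {x : Fin (2 ^ (K + 1)) × Fin (2 * r) // (x.1 : ℕ) / 2 ^ (K + 1 - ℓ) = (n : ℕ)})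
          (y : {y : Fin (2 ^ (K + 1)) × Fin (2 * r) // (y.1 : ℕ) / 2 ^ (K + 1 - ℓ) = (n' : ℕ)})
          => A'' x.1 y.1)
        (fun p a => U p.1.1 p.1.2 a) (fun q b => V q.1.1 q.1.2 b)
        (fun p a => ⟨(childEquiv (K + 1) r) (p.1.1, a), hdiv p.1.1 a n p.2⟩)
        (fun q b => ⟨(childEquiv (K + 1) r) (q.1.1, b), hdiv q.1.1 b n' q.2⟩) ?_)
        (IH r (2 * r) A'' h2 ℓ hℓ1 hℓK n n' hnn')
      intro p q
      have hne : p.1.1 ≠ q.1.1 := by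
        intro hEq
        exact hnn' (Fin.ext (by rw [← p.2, ← q.2, hEq]))
      have h1' := h1 p.1 q.1
      rw [if_neg hne, zero_add] at h1'
      simp only [Matrix.of_apply, hA'', Equiv.symm_apply_apply]
      exact h1'
/-- If `A ∈ HSS(r, T)` for a cluster tree `T` of depth `L ≥ 1`, then for
any two distinct nodes `τ ≠ τ'` of the same depth `ℓ` with `1 ≤ ℓ ≤ L`, the off-diagonal
submatrix `A[I_τ × I_τ']` has rank at most `r`. -/
theorem hss_offdiag_rank {d L : ℕ} (hL : 1 ≤ L) (T : ClusterTree d L) (r : ℕ)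
    (A : Matrix (Fin d) (Fin d) ℝ) (hA : MemHSS r T A)
    (ℓ : ℕ) (hℓ1 : 1 ≤ ℓ) (hℓL : ℓ ≤ L) (n n' : Fin (2 ^ ℓ)) (hnn' : n ≠ n') :
    Matrix.rank (Matrix.of fun (p : {x : Fin d // nodeIdx T ℓ n x})
      (q : {x : Fin d // nodeIdx T ℓ n' x}) => A p.1 q.1) ≤ r := by
  obtain ⟨M, rfl⟩ : ∃ M, L = M + 1 := ⟨L - 1, by omega⟩
  set As : Matrix ((t : Fin (2 ^ (M + 1))) × Fin (T.sizes t))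
      ((t : Fin (2 ^ (M + 1))) × Fin (T.sizes t)) ℝ :=
    Matrix.of fun p q => A (T.idx (toLex p)) (T.idx (toLex q)) with hAs
  obtain ⟨U, V, Dm, h1, h2⟩ := hA
  have hAeq : ∀ x y : Fin d,
      A x y = As (ofLex (T.idx.symm x)) (ofLex (T.idx.symm y)) := by
    intro x y
    simp only [hAs, Matrix.of_apply]
    rw [show toLex (ofLex (T.idx.symm x)) = T.idx.symm x from rfl,
      show toLex (ofLex (T.idx.symm y)) = T.idx.symm y from rfl,
      OrderIso.apply_symm_apply, OrderIso.apply_symm_apply]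
  have hnode : ∀ (x : Fin d) (m : Fin (2 ^ ℓ)), nodeIdx T ℓ m x →
      ((ofLex (T.idx.symm x)).1 : ℕ) / 2 ^ (M + 1 - ℓ) = (m : ℕ) := fun _ _ h => h
  have hne : ∀ (x y : Fin d), nodeIdx T ℓ n x → nodeIdx T ℓ n' y →
      (ofLex (T.idx.symm x)).1 ≠ (ofLex (T.idx.symm y)).1 := by
    intro x y hx hy hEq
    exact hnn' (Fin.ext (by rw [← hnode x n hx, ← hnode y n' hy, hEq]))
  rcases eq_or_lt_of_le hℓL with hcase | hcase
  · -- ℓ = M + 1 : direct case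
    obtain rfl : ℓ = M + 1 := hcase
    have he : (2 : ℕ) ^ (M + 1 - (M + 1)) = 1 := by simp
    have hval : ∀ (x : Fin d) (m : Fin (2 ^ (M + 1))), nodeIdx T (M + 1) m x →
        (ofLex (T.idx.symm x)).1 = m := by
      intro x m hx
      have := hnode x m hx
      rw [he, Nat.div_one] at this
      exact Fin.ext this
    refine le_trans (rank_le_of_factor _
        (Matrix.of fun (a b : Fin r) =>
          teleTop (M + 1) r T.sizes As U V Dm (n, a) (n', b))
        (fun x a => U (ofLex (T.idx.symm x.1)).1 (ofLex (T.idx.symm x.1)).2 a)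
        (fun y b => V (ofLex (T.idx.symm y.1)).1 (ofLex (T.idx.symm y.1)).2 b)
        (fun _ a => a) (fun _ b => b) ?_)
      (le_trans (Matrix.rank_le_card_width _) (by simp))
    rintro ⟨x, hx⟩ ⟨y, hy⟩
    have h1' := h1 (ofLex (T.idx.symm x)) (ofLex (T.idx.symm y))
    rw [dif_neg (hne x y hx hy), zero_add, ← hAs] at h1'
    simp only [Matrix.of_apply]
    rw [hAeq x y, h1']
    have hpx : ∀ a : Fin r, (((ofLex (T.idx.symm x)).1 : Fin (2 ^ (M + 1))), a) = (n, a) :=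
      fun a => by rw [hval x n hx]
    have hpy : ∀ b : Fin r, (((ofLex (T.idx.symm y)).1 : Fin (2 ^ (M + 1))), b) = (n', b) :=
      fun b => by rw [hval y n' hy]
    simp only [hpx, hpy]
  · -- ℓ ≤ M : recursive case
    have hℓM : ℓ ≤ M := by omega
    obtain ⟨K, rfl⟩ : ∃ K, M = K + 1 := ⟨M - 1, by omega⟩
    set A'' : Matrix (Fin (2 ^ (K + 1)) × Fin (2 * r)) (Fin (2 ^ (K + 1)) × Fin (2 * r)) ℝ :=
      Matrix.of fun p q => teleTop (K + 1 + 1) r T.sizes As U V Dm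
        ((childEquiv (K + 1) r).symm p) ((childEquiv (K + 1) r).symm q) with hA''
    have hdiv : ∀ (t : Fin (2 ^ (K + 1 + 1))) (a : Fin r) (m : Fin (2 ^ ℓ)),
        (t : ℕ) / 2 ^ (K + 1 + 1 - ℓ) = (m : ℕ) →
        (((childEquiv (K + 1) r) (t, a)).1 : ℕ) / 2 ^ (K + 1 - ℓ) = (m : ℕ) := by
      intro t a m hm
      rw [childEquiv_fst, Nat.div_div_eq_div_mul, ← pow_succ']
      rw [show (K + 1 - ℓ) + 1 = K + 1 + 1 - ℓ by omega]
      exact hm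
    refine le_trans (rank_le_of_factor _
        (Matrix.of fun
          (x : {x : Fin (2 ^ (K + 1)) × Fin (2 * r) // (x.1 : ℕ) / 2 ^ (K + 1 - ℓ) = (n : ℕ)})
          (y : {y : Fin (2 ^ (K + 1)) × Fin (2 * r) // (y.1 : ℕ) / 2 ^ (K + 1 - ℓ) = (n' : ℕ)})
          => A'' x.1 y.1)
        (fun x a => U (ofLex (T.idx.symm x.1)).1 (ofLex (T.idx.symm x.1)).2 a)
        (fun y b => V (ofLex (T.idx.symm y.1)).1 (ofLex (T.idx.symm y.1)).2 b)
        (fun x a => ⟨(childEquiv (K + 1) r) ((ofLex (T.idx.symm x.1)).1, a),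
          hdiv _ a n (hnode x.1 n x.2)⟩)
        (fun y b => ⟨(childEquiv (K + 1) r) ((ofLex (T.idx.symm y.1)).1, b),
          hdiv _ b n' (hnode y.1 n' y.2)⟩) ?_)
      (hssc_offdiag K r (2 * r) A'' h2 ℓ hℓ1 hℓM n n' hnn')
    rintro ⟨x, hx⟩ ⟨y, hy⟩
    have h1' := h1 (ofLex (T.idx.symm x)) (ofLex (T.idx.symm y))
    rw [dif_neg (hne x y hx hy), zero_add, ← hAs] at h1'
    simp only [Matrix.of_apply, hA'', Equiv.symm_apply_apply]
    rw [hAeq x y, h1']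
end

section
/- Let T be a cluster tree of depth L for {1,…,d}, let λ > 0, let r ≥ 1 and r_1,…,r_ℓ ≥ 1 with max_i r_i ≥ r, and let G ∈ ℝ^{d×d} be invertible with G^{-1} ∈ HSS(r, T). Let b_1,…,b_N ∈ ℝ^d and u_j := G^{-1} b_j. Then the minimum of the loss L_N(θ) = Σ_{j=1}^N ‖N_θ(b_j) − u_j‖₂² + (λ/2) Σ_{i=1}^ℓ (α_i − 1)² over the constraint set {θ = (W_1, α_1, …, W_ℓ, α_ℓ) : W_i ∈ HSS(r_i, T), α_i ∈ ℝ} equals 0, it is attained, and every global minimizer θ* in this set satisfies α_i = 1 for all i and (W_ℓ ⋯ W_1) b_j = u_j for all j = 1,…,N; in particular N_{θ*}(b_j) = u_j for all j. -/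
/-! Leaky-ReLU networks and the empirical loss. -/

/-- The entrywise leaky ReLU with slope `a` on the negative half-line
(`LeakyReLU_a(x) = x` if `x ≥ 0` and `a·x` if `x < 0`). -/
noncomputable def leakyReLU (a : ℝ) {d : ℕ} (z : Fin d → ℝ) : Fin d → ℝ :=
  fun i => if 0 ≤ z i then z i else a * z i

/-- The network `N_θ(b) = H_ℓ(⋯ H_1(b) ⋯)` with layers `H_i(z) = LeakyReLU_{a i}(W i · z)`,
for parameters `θ = (W, a)`. -/
noncomputable def netFwd {d ℓ : ℕ} (W : Fin ℓ → Matrix (Fin d) (Fin d) ℝ) (a : Fin ℓ → ℝ)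
    (b : Fin d → ℝ) : Fin d → ℝ :=
  (List.finRange ℓ).foldl (fun z i => leakyReLU (a i) ((W i).mulVec z)) b

/-- The ordered matrix product `W_ℓ ⋯ W_1`. -/
noncomputable def matProd {d ℓ : ℕ} (W : Fin ℓ → Matrix (Fin d) (Fin d) ℝ) :
    Matrix (Fin d) (Fin d) ℝ :=
  (List.finRange ℓ).foldl (fun M i => W i * M) 1

/-- Squared Euclidean norm `‖v‖₂²` of a vector in `ℝ^d`. -/
noncomputable def sqNorm {d : ℕ} (v : Fin d → ℝ) : ℝ := ∑ i, v i ^ 2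

/-- The regularized empirical loss
`L_N(θ) = ∑_j ‖N_θ(b_j) − u_j‖₂² + (λ/2) ∑_i (α_i − 1)²`. -/
noncomputable def lossFun {d ℓ N : ℕ} (lam : ℝ) (b u : Fin N → Fin d → ℝ)
    (W : Fin ℓ → Matrix (Fin d) (Fin d) ℝ) (a : Fin ℓ → ℝ) : ℝ :=
  (∑ j, sqNorm (netFwd W a (b j) - u j)) + lam / 2 * ∑ i, (a i - 1) ^ 2

section Aux

lemma leakyReLU_one {d : ℕ} (z : Fin d → ℝ) : leakyReLU 1 z = z := by
  funext i; simp [leakyReLU]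

lemma foldl_mulVec {d ℓ : ℕ} (W : Fin ℓ → Matrix (Fin d) (Fin d) ℝ) (b : Fin d → ℝ) :
    ∀ (l : List (Fin ℓ)) (M : Matrix (Fin d) (Fin d) ℝ),
      (l.foldl (fun M i => W i * M) M).mulVec b
        = l.foldl (fun z i => leakyReLU 1 ((W i).mulVec z)) (M.mulVec b) := by
  intro l
  induction l with
  | nil => intro M; rfl
  | cons i l ih =>
    intro M
    simp only [List.foldl_cons, ih, leakyReLU_one, Matrix.mulVec_mulVec]

lemma netFwd_one {d ℓ : ℕ} (W : Fin ℓ → Matrix (Fin d) (Fin d) ℝ) (b : Fin d → ℝ) :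
    netFwd W (fun _ => 1) b = (matProd W).mulVec b := by
  rw [netFwd, matProd, foldl_mulVec, Matrix.one_mulVec]

lemma foldl_one_of {d ℓ : ℕ} (W : Fin ℓ → Matrix (Fin d) (Fin d) ℝ) (i₀ : Fin ℓ)
    (hW : ∀ i, i ≠ i₀ → W i = 1) :
    ∀ (l : List (Fin ℓ)), i₀ ∉ l → ∀ M, l.foldl (fun M i => W i * M) M = M := by
  intro l
  induction l with
  | nil => intros; rfl
  | cons i l ih =>
    intro h M
    simp only [List.mem_cons, not_or] at h
    simp only [List.foldl_cons, hW i (fun e => h.1 e.symm), Matrix.one_mul, ih h.2]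

lemma matProd_single {d ℓ : ℕ} (W : Fin ℓ → Matrix (Fin d) (Fin d) ℝ) (i₀ : Fin ℓ)
    (hW : ∀ i, i ≠ i₀ → W i = 1) : matProd W = W i₀ := by
  have key : ∀ (l : List (Fin ℓ)), i₀ ∈ l → l.Nodup →
      ∀ M, l.foldl (fun M i => W i * M) M = W i₀ * M := by
    intro l
    induction l with
    | nil => intro h; simp at h
    | cons i l ih =>
      intro hmem hnd M
      rcases List.nodup_cons.mp hnd with ⟨hni, hnd'⟩
      by_cases hi : i = i₀
      · have hni' : i₀ ∉ l := hi ▸ hni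
        rw [List.foldl_cons, foldl_one_of W i₀ hW l hni', hi]
      · rcases List.mem_cons.mp hmem with h | h
        · exact absurd h.symm hi
        · simp only [List.foldl_cons, hW i hi, Matrix.one_mul, ih h hnd' M]
  rw [matProd, key (List.finRange ℓ) (List.mem_finRange i₀) (List.nodup_finRange ℓ),
    Matrix.mul_one]

lemma sqNorm_nonneg {d : ℕ} (v : Fin d → ℝ) : 0 ≤ sqNorm v :=
  Finset.sum_nonneg fun i _ => sq_nonneg _

lemma sqNorm_eq_zero {d : ℕ} {v : Fin d → ℝ} (h : sqNorm v = 0) : v = 0 := by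
  funext i
  have := (Finset.sum_eq_zero_iff_of_nonneg (fun i _ => sq_nonneg (v i))).mp h i
    (Finset.mem_univ i)
  have := pow_eq_zero_iff (n := 2) (by norm_num) |>.mp this
  simpa using this

end Aux

section HSSAux
open Matrix

/-- 0/1 embedding matrix associated to `f`. -/
def embMat {s s' : ℕ} (f : Fin s → Fin s') : Matrix (Fin s') (Fin s) ℝ :=
  Matrix.of fun i' i => if f i = i' then 1 else 0

lemma embMat_orth {s s' : ℕ} {f : Fin s → Fin s'} (hf : Function.Injective f) :
    (embMat f)ᵀ * embMat f = 1 := by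
  ext a c
  simp only [Matrix.mul_apply, Matrix.transpose_apply, embMat, Matrix.of_apply,
    ite_mul, one_mul, zero_mul]
  rw [Finset.sum_ite_eq Finset.univ (f a)]
  simp [Matrix.one_apply, hf.eq_iff, eq_comm]

lemma embMat_cancel {s s' n : ℕ} {f : Fin s → Fin s'} (hf : Function.Injective f)
    (X : Matrix (Fin s) (Fin n) ℝ) : (embMat f)ᵀ * (embMat f * X) = X := by
  rw [← Matrix.mul_assoc, embMat_orth hf, Matrix.one_mul]

/-- diagonal block extraction -/
def blk {n s : ℕ} (A : Matrix (Fin n × Fin s) (Fin n × Fin s) ℝ) (t t' : Fin n) :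
    Matrix (Fin s) (Fin s) ℝ := Matrix.of fun i j => A (t, i) (t', j)

/-- blockwise zero-padding of a matrix along an embedding `f` -/
def padM {n s s' : ℕ} (f : Fin s → Fin s')
    (A : Matrix (Fin n × Fin s) (Fin n × Fin s) ℝ) :
    Matrix (Fin n × Fin s') (Fin n × Fin s') ℝ :=
  Matrix.of fun p q => (embMat f * blk A p.1 q.1 * (embMat f)ᵀ) p.2 q.2

lemma triple_sum {s s' r r' : ℕ} (U : Matrix (Fin s) (Fin r) ℝ)
    (M : Matrix (Fin s) (Fin s') ℝ) (V : Matrix (Fin s') (Fin r') ℝ) (a : Fin r)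
    (b : Fin r') : (Uᵀ * M * V) a b = ∑ i, ∑ j, U i a * M i j * V j b := by
  simp only [Matrix.mul_apply, Matrix.transpose_apply, Finset.sum_mul]
  rw [Finset.sum_comm]

lemma triple_sum' {s s' r r' : ℕ} (X : Matrix (Fin s) (Fin r) ℝ)
    (M : Matrix (Fin r) (Fin r') ℝ) (Y : Matrix (Fin s') (Fin r') ℝ) (i : Fin s)
    (j : Fin s') : (X * M * Yᵀ) i j = ∑ a, ∑ b, X i a * M a b * Y j b := by
  simp only [Matrix.mul_apply, Matrix.transpose_apply, Finset.sum_mul]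
  rw [Finset.sum_comm]

lemma mite_apply {m n : ℕ} (c : Prop) [Decidable c] (M : Matrix (Fin m) (Fin n) ℝ)
    (i : Fin m) (j : Fin n) : (if c then M else 0) i j = if c then M i j else 0 := by
  split <;> simp

lemma isHSSc_zero : ∀ (L r s : ℕ), IsHSSc L r s (0 : Matrix _ _ ℝ) := by
  intro L
  induction L with
  | zero => intro r s; trivial
  | succ L ih =>
    intro r s
    refine ⟨fun _ => 0, fun _ => 0, fun _ => 0, ?_, ?_⟩
    · intro p q; simp [teleSmall]
    · have h : (Matrix.of fun p q => teleSmall r s (2 ^ (L + 1))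
          (0 : Matrix _ _ ℝ) (fun _ => 0) (fun _ => 0) (fun _ => 0)
          ((childEquiv L r).symm p) ((childEquiv L r).symm q)) = 0 := by
        ext p q; simp [teleSmall]
      rw [h]; exact ih r (2 * r)

lemma teleSmall_eq {r s n : ℕ} (A : Matrix (Fin n × Fin s) (Fin n × Fin s) ℝ)
    (U V : Fin n → Matrix (Fin s) (Fin r) ℝ) (Dm : Fin n → Matrix (Fin s) (Fin s) ℝ)
    (p q : Fin n × Fin r) :
    teleSmall r s n A U V Dm p q
      = ((U p.1)ᵀ * (blk A p.1 q.1 - if p.1 = q.1 then Dm p.1 else 0) * V q.1) p.2 q.2 := by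
  rw [triple_sum]
  simp only [teleSmall, Matrix.of_apply, Matrix.sub_apply, blk, mite_apply]

end HSSAux

section ChildAux
open Matrix

lemma childEquiv_symm_apply (L r : ℕ) (P : Fin (2 ^ L)) (I : Fin (2 * r)) :
    (childEquiv L r).symm (P, I)
      = (⟨I.val / r + 2 * P.val, by
            have hr0 : 0 < r := by
              rcases Nat.eq_zero_or_pos r with h | h
              · exact absurd I.isLt (by omega)
              · exact h
            have h1 : I.val / r < 2 := (Nat.div_lt_iff_lt_mul hr0).mpr
              (by have := I.isLt; omega)
            have h2 := P.isLt
            have : 2 * P.val + I.val / r < 2 * 2 ^ L := by omega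
            rw [pow_succ]; omega⟩,
         ⟨I.val % r, by
            have hr0 : 0 < r := by
              rcases Nat.eq_zero_or_pos r with h | h
              · exact absurd I.isLt (by omega)
              · exact h
            exact Nat.mod_lt _ hr0⟩) := by
  simp only [childEquiv, Equiv.symm_trans_apply, Equiv.prodCongr_symm, Equiv.refl_symm,
    Equiv.prodCongr_apply, Equiv.coe_refl, Prod.map_apply, id_eq,
    Equiv.symm_symm, Equiv.prodAssoc_symm_apply, Equiv.symm_trans_apply]
  simp [finProdFinEquiv, Fin.divNat, Fin.modNat, finCongr, Fin.cast]

end ChildAux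

section EmbAux
open Matrix

lemma embConj_app {s s' : ℕ} (f : Fin s → Fin s') (hf : Function.Injective f)
    (X : Matrix (Fin s) (Fin s) ℝ) (i j : Fin s) :
    (embMat f * X * (embMat f)ᵀ) (f i) (f j) = X i j := by
  have h1 : ∀ b : Fin s, (embMat f)ᵀ b (f j) = if b = j then 1 else 0 := by
    intro b; simp [embMat, Matrix.transpose_apply, hf.eq_iff]
  have h2 : ∀ a : Fin s, embMat f (f i) a = if a = i then 1 else 0 := by
    intro a; simp [embMat, hf.eq_iff]
  simp only [Matrix.mul_apply, h1, h2, mul_ite, mul_one, mul_zero, ite_mul, one_mul,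
    zero_mul, Finset.sum_ite_eq, Finset.sum_ite_eq', Finset.mem_univ, if_true]

lemma embConj_zero_left {s s' : ℕ} (f : Fin s → Fin s') (X : Matrix (Fin s) (Fin s) ℝ)
    {i' : Fin s'} (j' : Fin s') (h : ∀ i, f i ≠ i') :
    (embMat f * X * (embMat f)ᵀ) i' j' = 0 := by
  simp only [Matrix.mul_apply, embMat, Matrix.of_apply, Matrix.transpose_apply]
  apply Finset.sum_eq_zero; intro b _
  rw [Finset.sum_eq_zero]; · ring
  intro a _; rw [if_neg (h a)]; ring

lemma embConj_zero_right {s s' : ℕ} (f : Fin s → Fin s') (X : Matrix (Fin s) (Fin s) ℝ)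
    (i' : Fin s') {j' : Fin s'} (h : ∀ j, f j ≠ j') :
    (embMat f * X * (embMat f)ᵀ) i' j' = 0 := by
  simp only [Matrix.mul_apply, embMat, Matrix.of_apply, Matrix.transpose_apply]
  apply Finset.sum_eq_zero; intro b _
  rw [if_neg (h b)]; ring

/-- The embedding `Fin (2r) → Fin (2r')` used to pad the coarser level. -/
def padEmb {r r' : ℕ} (hr : 1 ≤ r) (hrr' : r ≤ r') : Fin (2 * r) → Fin (2 * r') :=
  fun J => ⟨J.val % r + r' * (J.val / r), by
    have h1 : J.val % r < r := Nat.mod_lt _ hr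
    have h2 : J.val / r < 2 := (Nat.div_lt_iff_lt_mul hr).mpr (by have := J.isLt; omega)
    have : r' * (J.val / r) ≤ r' * 1 := Nat.mul_le_mul_left _ (by omega)
    omega⟩

lemma padEmb_val {r r' : ℕ} (hr : 1 ≤ r) (hrr' : r ≤ r') (J : Fin (2 * r)) :
    (padEmb hr hrr' J).val = J.val % r + r' * (J.val / r) := rfl

lemma padEmb_mod {r r' : ℕ} (hr : 1 ≤ r) (hrr' : r ≤ r') (J : Fin (2 * r)) :
    (padEmb hr hrr' J).val % r' = J.val % r := by
  rw [padEmb_val, Nat.add_mul_mod_self_left, Nat.mod_eq_of_lt (lt_of_lt_of_le (Nat.mod_lt _ hr) hrr')]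

lemma padEmb_div {r r' : ℕ} (hr : 1 ≤ r) (hrr' : r ≤ r') (J : Fin (2 * r)) :
    (padEmb hr hrr' J).val / r' = J.val / r := by
  rw [padEmb_val, Nat.add_mul_div_left _ _ (by omega : 0 < r'),
    Nat.div_eq_of_lt (lt_of_lt_of_le (Nat.mod_lt _ hr) hrr'), Nat.zero_add]

lemma padEmb_inj {r r' : ℕ} (hr : 1 ≤ r) (hrr' : r ≤ r') :
    Function.Injective (padEmb hr hrr') := by
  intro J K h
  have h1 := padEmb_mod hr hrr' J
  have h2 := padEmb_mod hr hrr' K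
  have h3 := padEmb_div hr hrr' J
  have h4 := padEmb_div hr hrr' K
  rw [h] at h1 h3
  have e1 : J.val % r = K.val % r := by rw [← h1, h2]
  have e2 : J.val / r = K.val / r := by rw [← h3, h4]
  apply Fin.ext
  calc J.val = r * (J.val / r) + J.val % r := (Nat.div_add_mod _ _).symm
    _ = r * (K.val / r) + K.val % r := by rw [e1, e2]
    _ = K.val := Nat.div_add_mod _ _

end EmbAux

section PadReindex
open Matrix

lemma pad_reindex {L r r' : ℕ} (hr : 1 ≤ r) (hrr' : r ≤ r')
    (F : Fin (2 ^ (L + 1)) → Fin (2 ^ (L + 1)) → Matrix (Fin r) (Fin r) ℝ)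
    (F' : Fin (2 ^ (L + 1)) → Fin (2 ^ (L + 1)) → Matrix (Fin r') (Fin r') ℝ)
    (hF : ∀ t t', F' t t'
        = embMat (Fin.castLE hrr') * F t t' * (embMat (Fin.castLE hrr'))ᵀ) :
    (Matrix.of fun p q : Fin (2 ^ L) × Fin (2 * r') =>
        F' ((childEquiv L r').symm p).1 ((childEquiv L r').symm q).1
           ((childEquiv L r').symm p).2 ((childEquiv L r').symm q).2)
    = padM (padEmb hr hrr')
        (Matrix.of fun p q : Fin (2 ^ L) × Fin (2 * r) =>
          F ((childEquiv L r).symm p).1 ((childEquiv L r).symm q).1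
            ((childEquiv L r).symm p).2 ((childEquiv L r).symm q).2) := by
  have hr' : 1 ≤ r' := le_trans hr hrr'
  have hcl : Function.Injective (Fin.castLE hrr' : Fin r → Fin r') :=
    Fin.castLE_injective hrr'
  have hg := padEmb_inj hr hrr'
  ext ⟨P, I⟩ ⟨Q, J⟩
  rw [Matrix.of_apply, childEquiv_symm_apply, childEquiv_symm_apply, hF]
  simp only [padM, Matrix.of_apply]
  by_cases hI : I.val % r' < r
  · by_cases hJ : J.val % r' < r
    · -- both in range
      set J1 : Fin (2 * r) := ⟨I.val % r' + r * (I.val / r'), by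
        have h2 : I.val / r' < 2 := (Nat.div_lt_iff_lt_mul (by omega)).mpr
          (by have := I.isLt; omega)
        have : r * (I.val / r') ≤ r * 1 := Nat.mul_le_mul_left _ (by omega)
        omega⟩ with hJ1
      set J2 : Fin (2 * r) := ⟨J.val % r' + r * (J.val / r'), by
        have h2 : J.val / r' < 2 := (Nat.div_lt_iff_lt_mul (by omega)).mpr
          (by have := J.isLt; omega)
        have : r * (J.val / r') ≤ r * 1 := Nat.mul_le_mul_left _ (by omega)
        omega⟩ with hJ2
      have hJ1mod : J1.val % r = I.val % r' := by
        rw [hJ1]; simp only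
        rw [Nat.add_mul_mod_self_left, Nat.mod_eq_of_lt hI]
      have hJ1div : J1.val / r = I.val / r' := by
        rw [hJ1]; simp only
        rw [Nat.add_mul_div_left _ _ (by omega : 0 < r), Nat.div_eq_of_lt hI, Nat.zero_add]
      have hJ2mod : J2.val % r = J.val % r' := by
        rw [hJ2]; simp only
        rw [Nat.add_mul_mod_self_left, Nat.mod_eq_of_lt hJ]
      have hJ2div : J2.val / r = J.val / r' := by
        rw [hJ2]; simp only
        rw [Nat.add_mul_div_left _ _ (by omega : 0 < r), Nat.div_eq_of_lt hJ, Nat.zero_add]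
      have hgJ1 : padEmb hr hrr' J1 = I := by
        apply Fin.ext
        rw [padEmb_val, hJ1mod, hJ1div]
        have := Nat.div_add_mod I.val r'
        omega
      have hgJ2 : padEmb hr hrr' J2 = J := by
        apply Fin.ext
        rw [padEmb_val, hJ2mod, hJ2div]
        have := Nat.div_add_mod J.val r'
        omega
      have hL : (⟨I.val % r', Nat.mod_lt _ (by omega)⟩ : Fin r')
          = Fin.castLE hrr' ⟨I.val % r', hI⟩ := rfl
      have hL2 : (⟨J.val % r', Nat.mod_lt _ (by omega)⟩ : Fin r')
          = Fin.castLE hrr' ⟨J.val % r', hJ⟩ := rfl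
      rw [hL, hL2, embConj_app _ hcl]
      conv_rhs => rw [← hgJ1, ← hgJ2]
      rw [embConj_app _ hg]
      simp only [blk, Matrix.of_apply, childEquiv_symm_apply]
      simp only [hJ1mod, hJ1div, hJ2mod, hJ2div]
    · -- J out of range: both sides 0
      rw [embConj_zero_right _ _ _ (fun a h => by
        have h2 : J.val % r' = a.val := (Fin.ext_iff.mp h).symm
        have := a.isLt
        omega)]
      rw [embConj_zero_right _ _ _ (fun J2 => by
        intro h
        have := padEmb_mod hr hrr' J2
        rw [h] at this
        have := Nat.mod_lt J2.val hr
        omega)]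
  · -- I out of range: both sides 0
    rw [embConj_zero_left _ _ _ (fun a h => by
      have h2 : I.val % r' = a.val := (Fin.ext_iff.mp h).symm
      have := a.isLt
      omega)]
    rw [embConj_zero_left _ _ _ (fun J1 => by
      intro h
      have := padEmb_mod hr hrr' J1
      rw [h] at this
      have := Nat.mod_lt J1.val hr
      omega)]

end PadReindex

section HSSPad
open Matrix

lemma isHSSc_pad : ∀ (L r r' s s' : ℕ), 1 ≤ r → r ≤ r' →
    ∀ (f : Fin s → Fin s'), Function.Injective f →
    ∀ (A : Matrix (Fin (2 ^ L) × Fin s) (Fin (2 ^ L) × Fin s) ℝ),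
      IsHSSc L r s A → IsHSSc L r' s' (padM f A) := by
  intro L
  induction L with
  | zero => intros; trivial
  | succ L IH =>
    intro r r' s s' hr hrr' f hf A hA
    obtain ⟨U, V, Dm, HA, HR⟩ := hA
    have hcl : Function.Injective (Fin.castLE hrr' : Fin r → Fin r') :=
      Fin.castLE_injective hrr'
    set P : Matrix (Fin s') (Fin s) ℝ := embMat f with hP
    set Qm : Matrix (Fin r') (Fin r) ℝ := embMat (Fin.castLE hrr') with hQ
    set U' : Fin (2 ^ (L + 1)) → Matrix (Fin s') (Fin r') ℝ :=
      fun t => P * U t * Qmᵀ with hU'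
    set V' : Fin (2 ^ (L + 1)) → Matrix (Fin s') (Fin r') ℝ :=
      fun t => P * V t * Qmᵀ with hV'
    set Dm' : Fin (2 ^ (L + 1)) → Matrix (Fin s') (Fin s') ℝ :=
      fun t => P * Dm t * Pᵀ with hD'
    set tsB : Fin (2 ^ (L + 1)) → Fin (2 ^ (L + 1)) → Matrix (Fin r) (Fin r) ℝ :=
      fun t t' => Matrix.of fun a b =>
        teleSmall r s (2 ^ (L + 1)) A U V Dm (t, a) (t', b) with htsB
    set tsB' : Fin (2 ^ (L + 1)) → Fin (2 ^ (L + 1)) → Matrix (Fin r') (Fin r') ℝ :=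
      fun t t' => Matrix.of fun a b =>
        teleSmall r' s' (2 ^ (L + 1)) (padM f A) U' V' Dm' (t, a) (t', b) with htsB'
    have hAm : ∀ t t', blk A t t'
        = (if t = t' then Dm t else 0) + U t * tsB t t' * (V t')ᵀ := by
      intro t t'
      ext i j
      rw [Matrix.add_apply, mite_apply, triple_sum']
      exact HA (t, i) (t', j)
    have htsBm : ∀ t t', tsB t t'
        = (U t)ᵀ * (blk A t t' - if t = t' then Dm t else 0) * V t' := by
      intro t t'; ext a b; exact teleSmall_eq A U V Dm (t, a) (t', b)
    have hmid : ∀ t t', blk (padM f A) t t' - (if t = t' then Dm' t else 0)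
        = P * (blk A t t' - if t = t' then Dm t else 0) * Pᵀ := by
      intro t t'
      have hblk : blk (padM f A) t t' = P * blk A t t' * Pᵀ := rfl
      rw [hblk]
      by_cases h : t = t' <;>
        simp [h, Matrix.mul_sub, Matrix.sub_mul, hD']
    have htsB'm : ∀ t t', tsB' t t' = Qm * tsB t t' * Qmᵀ := by
      intro t t'
      ext a b
      show teleSmall r' s' (2 ^ (L + 1)) (padM f A) U' V' Dm' (t, a) (t', b) = _
      rw [teleSmall_eq, hmid]
      show ((P * U t * Qmᵀ)ᵀ * (P * (blk A t t' - if t = t' then Dm t else 0) * Pᵀ)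
          * (P * V t' * Qmᵀ)) a b = _
      rw [htsBm]
      congr 1
      simp only [Matrix.transpose_mul, Matrix.transpose_transpose, Matrix.mul_assoc]
      rw [embMat_cancel hf, embMat_cancel hf]
    have key : ∀ t t', blk (padM f A) t t'
        = (if t = t' then Dm' t else 0) + U' t * tsB' t t' * (V' t')ᵀ := by
      intro t t'
      have hblk : blk (padM f A) t t' = P * blk A t t' * Pᵀ := rfl
      rw [hblk, hAm t t', Matrix.mul_add, Matrix.add_mul]
      congr 1
      · by_cases h : t = t' <;> simp [h, hD']
      · rw [htsB'm, hU', hV']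
        simp only [Matrix.transpose_mul, Matrix.transpose_transpose, Matrix.mul_assoc]
        rw [embMat_cancel hcl, embMat_cancel hcl]
    refine ⟨U', V', Dm', ?_, ?_⟩
    · intro p q
      calc padM f A p q
          = ((if p.1 = q.1 then Dm' p.1 else 0)
              + U' p.1 * tsB' p.1 q.1 * (V' q.1)ᵀ) p.2 q.2 := by
            show (blk (padM f A) p.1 q.1) p.2 q.2 = _
            rw [key]
        _ = _ := by
            rw [Matrix.add_apply, mite_apply, triple_sum']
            simp only [htsB', Matrix.of_apply]
    · have hpr := pad_reindex hr hrr' tsB tsB' htsB'm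
      have h2 : (Matrix.of fun p q => teleSmall r' s' (2 ^ (L + 1)) (padM f A) U' V' Dm'
            ((childEquiv L r').symm p) ((childEquiv L r').symm q))
          = padM (padEmb hr hrr')
            (Matrix.of fun p q => teleSmall r s (2 ^ (L + 1)) A U V Dm
              ((childEquiv L r).symm p) ((childEquiv L r).symm q)) := by
        ext p q
        exact congrFun (congrFun hpr p) q
      rw [h2]
      exact IH r r' (2 * r) (2 * r') hr hrr' (padEmb hr hrr') (padEmb_inj hr hrr') _ HR

end HSSPad

section TopPad
open Matrix

lemma teleTop_eq {L r : ℕ} (sizes : Fin (2 ^ L) → ℕ)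
    (A : Matrix ((t : Fin (2 ^ L)) × Fin (sizes t)) ((t : Fin (2 ^ L)) × Fin (sizes t)) ℝ)
    (U V : ∀ t, Matrix (Fin (sizes t)) (Fin r) ℝ)
    (Dm : ∀ t, Matrix (Fin (sizes t)) (Fin (sizes t)) ℝ)
    (p q : Fin (2 ^ L) × Fin r) :
    teleTop L r sizes A U V Dm p q
      = ((U p.1)ᵀ * (Matrix.of fun i j => A ⟨p.1, i⟩ ⟨q.1, j⟩ -
          if h : p.1 = q.1 then Dm p.1 i (Fin.cast (congrArg sizes h.symm) j) else 0)
          * V q.1) p.2 q.2 := by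
  rw [triple_sum]
  simp only [teleTop, Matrix.of_apply]

lemma isHSSSigma_pad {L r r' : ℕ} (hr : 1 ≤ r) (hrr' : r ≤ r')
    (sizes : Fin (2 ^ L) → ℕ)
    (A : Matrix ((t : Fin (2 ^ L)) × Fin (sizes t)) ((t : Fin (2 ^ L)) × Fin (sizes t)) ℝ) :
    IsHSSSigma L r sizes A → IsHSSSigma L r' sizes A := by
  cases L with
  | zero => intro _; trivial
  | succ L =>
    rintro ⟨U, V, Dm, HA, HR⟩
    have hcl : Function.Injective (Fin.castLE hrr' : Fin r → Fin r') :=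
      Fin.castLE_injective hrr'
    set Qm : Matrix (Fin r') (Fin r) ℝ := embMat (Fin.castLE hrr') with hQ
    set U' : ∀ t, Matrix (Fin (sizes t)) (Fin r') ℝ := fun t => U t * Qmᵀ with hU'
    set V' : ∀ t, Matrix (Fin (sizes t)) (Fin r') ℝ := fun t => V t * Qmᵀ with hV'
    set ttB : Fin (2 ^ (L + 1)) → Fin (2 ^ (L + 1)) → Matrix (Fin r) (Fin r) ℝ :=
      fun t t' => Matrix.of fun a b =>
        teleTop (L + 1) r sizes A U V Dm (t, a) (t', b) with httB
    set ttB' : Fin (2 ^ (L + 1)) → Fin (2 ^ (L + 1)) → Matrix (Fin r') (Fin r') ℝ :=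
      fun t t' => Matrix.of fun a b =>
        teleTop (L + 1) r' sizes A U' V' Dm (t, a) (t', b) with httB'
    have httBm : ∀ t t', ttB t t'
        = (U t)ᵀ * (Matrix.of fun i j => A ⟨t, i⟩ ⟨t', j⟩ -
            if h : t = t' then Dm t i (Fin.cast (congrArg sizes h.symm) j) else 0)
            * V t' := by
      intro t t'; ext a b; exact teleTop_eq sizes A U V Dm (t, a) (t', b)
    have httB'm : ∀ t t', ttB' t t' = Qm * ttB t t' * Qmᵀ := by
      intro t t'
      ext a b
      show teleTop (L + 1) r' sizes A U' V' Dm (t, a) (t', b) = _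
      rw [teleTop_eq, httBm]
      simp only [hU', hV', Matrix.transpose_mul, Matrix.transpose_transpose,
        Matrix.mul_assoc]
    refine ⟨U', V', Dm, ?_, ?_⟩
    · intro p q
      rw [HA p q]
      congr 1
      symm
      calc (∑ a : Fin r', ∑ b : Fin r', U' p.1 p.2 a
              * teleTop (L + 1) r' sizes A U' V' Dm (p.1, a) (q.1, b) * V' q.1 q.2 b)
          = (U' p.1 * ttB' p.1 q.1 * (V' q.1)ᵀ) p.2 q.2 := by
            rw [triple_sum']
            simp only [httB', Matrix.of_apply]
        _ = (U p.1 * ttB p.1 q.1 * (V q.1)ᵀ) p.2 q.2 := by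
            rw [httB'm, hU', hV']
            simp only [Matrix.transpose_mul, Matrix.transpose_transpose, Matrix.mul_assoc]
            rw [embMat_cancel hcl, embMat_cancel hcl]
        _ = _ := by rw [triple_sum']; simp only [httB, Matrix.of_apply]
    · have hpr := pad_reindex hr hrr' ttB ttB' httB'm
      have h2 : (Matrix.of fun p q => teleTop (L + 1) r' sizes A U' V' Dm
            ((childEquiv L r').symm p) ((childEquiv L r').symm q))
          = padM (padEmb hr hrr')
            (Matrix.of fun p q => teleTop (L + 1) r sizes A U V Dm
              ((childEquiv L r).symm p) ((childEquiv L r).symm q)) := by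
        ext p q
        exact congrFun (congrFun hpr p) q
      rw [h2]
      exact isHSSc_pad L r r' (2 * r) (2 * r') hr hrr' (padEmb hr hrr')
        (padEmb_inj hr hrr') _ HR

lemma memHSS_mono {d L : ℕ} {T : ClusterTree d L} {r r' : ℕ} (hr : 1 ≤ r)
    (hrr' : r ≤ r') {A : Matrix (Fin d) (Fin d) ℝ} (h : MemHSS r T A) :
    MemHSS r' T A :=
  isHSSSigma_pad hr hrr' T.sizes _ h

end TopPad

section IdHSS
open Matrix

lemma isHSSSigma_diag {L r' : ℕ} (sizes : Fin (2 ^ L) → ℕ)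
    (Dg : ∀ t, Matrix (Fin (sizes t)) (Fin (sizes t)) ℝ)
    (A : Matrix ((t : Fin (2 ^ L)) × Fin (sizes t)) ((t : Fin (2 ^ L)) × Fin (sizes t)) ℝ)
    (hA : ∀ p q, A p q
        = if h : p.1 = q.1 then Dg p.1 p.2 (Fin.cast (congrArg sizes h.symm) q.2) else 0) :
    IsHSSSigma L r' sizes A := by
  cases L with
  | zero => trivial
  | succ L =>
    refine ⟨fun _ => 0, fun _ => 0, Dg, ?_, ?_⟩
    · intro p q
      rw [hA p q]
      simp [teleTop]
    · have h0 : (Matrix.of fun p q => teleTop (L + 1) r' sizes A (fun _ => 0) (fun _ => 0)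
          Dg ((childEquiv L r').symm p) ((childEquiv L r').symm q)) = 0 := by
        ext p q; simp [teleTop]
      rw [h0]
      exact isHSSc_zero L r' (2 * r')

lemma memHSS_one {d L : ℕ} (T : ClusterTree d L) (r' : ℕ) :
    MemHSS r' T (1 : Matrix (Fin d) (Fin d) ℝ) := by
  apply isHSSSigma_diag T.sizes (fun t => 1)
  rintro ⟨pt, pi⟩ ⟨qt, qi⟩
  by_cases h : pt = qt
  · subst h
    rw [dif_pos rfl]
    by_cases h2 : pi = qi
    · subst h2
      simp [Matrix.one_apply]
    · have hne : T.idx (toLex ⟨pt, pi⟩) ≠ T.idx (toLex ⟨pt, qi⟩) := by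
        intro hEq
        apply h2
        have := toLex.injective (T.idx.injective hEq)
        simpa using this
      have hne2 : (Fin.cast (congrArg T.sizes (rfl : pt = pt).symm) qi) ≠ pi := by
        intro hEq
        apply h2
        apply Fin.ext
        rw [← hEq]
        rfl
      simp only [Matrix.of_apply, Matrix.one_apply, if_neg hne, if_neg (Ne.symm hne2)]
  · rw [dif_neg h]
    have hne : T.idx (toLex ⟨pt, pi⟩) ≠ T.idx (toLex ⟨qt, qi⟩) := by
      intro hEq
      apply h
      have := toLex.injective (T.idx.injective hEq)
      exact congrArg Sigma.fst this
    simp only [Matrix.of_apply, Matrix.one_apply, if_neg hne]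

end IdHSS

/-- Let `G` be invertible with `G⁻¹ ∈ HSS(r, T)`, let `r_i ≥ 1` with
`max_i r_i ≥ r`, and let `u_j = G⁻¹ b_j`.  Then the minimum of the loss over the
constraint set `{θ = (W, α) : W_i ∈ HSS(r_i, T)}` equals `0` and is attained, and every
global minimizer `θ*` over this set satisfies `α_i = 1` for all `i` and
`(W_ℓ ⋯ W_1) b_j = u_j` for all `j`; in particular `N_{θ*}(b_j) = u_j` for all `j`. -/
theorem hss_loss_global_minimizers {d L ℓ N : ℕ} (T : ClusterTree d L)
    (lam : ℝ) (hlam : 0 < lam)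
    (r : ℕ) (hr : 1 ≤ r) (rks : Fin ℓ → ℕ) (hrks : ∀ i, 1 ≤ rks i) (hmax : ∃ i, r ≤ rks i)
    (G : Matrix (Fin d) (Fin d) ℝ) (hG : IsUnit G) (hGinv : MemHSS r T G⁻¹)
    (b u : Fin N → Fin d → ℝ) (hu : ∀ j, u j = G⁻¹.mulVec (b j)) :
    IsLeast {v : ℝ | ∃ (W : Fin ℓ → Matrix (Fin d) (Fin d) ℝ) (a : Fin ℓ → ℝ),
        (∀ i, MemHSS (rks i) T (W i)) ∧ lossFun lam b u W a = v} 0 ∧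
    ∀ (W : Fin ℓ → Matrix (Fin d) (Fin d) ℝ) (a : Fin ℓ → ℝ),
      (∀ i, MemHSS (rks i) T (W i)) →
      (∀ (W' : Fin ℓ → Matrix (Fin d) (Fin d) ℝ) (a' : Fin ℓ → ℝ),
        (∀ i, MemHSS (rks i) T (W' i)) → lossFun lam b u W a ≤ lossFun lam b u W' a') →
      (∀ i, a i = 1) ∧ (∀ j, (matProd W).mulVec (b j) = u j) ∧
        ∀ j, netFwd W a (b j) = u j := by
  obtain ⟨i₀, hi₀⟩ := hmax
  set W₀ : Fin ℓ → Matrix (Fin d) (Fin d) ℝ := fun i => if i = i₀ then G⁻¹ else 1 with hW₀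
  have hW₀mem : ∀ i, MemHSS (rks i) T (W₀ i) := by
    intro i
    by_cases h : i = i₀
    · subst h
      simp only [hW₀, if_pos rfl]
      exact memHSS_mono hr hi₀ hGinv
    · simp only [hW₀, if_neg h]
      exact memHSS_one T _
  have hprod : matProd W₀ = G⁻¹ := by
    rw [matProd_single W₀ i₀ (fun i hi => by simp [hW₀, if_neg hi])]
    simp [hW₀]
  have hnet : ∀ j, netFwd W₀ (fun _ => 1) (b j) = u j := by
    intro j; rw [netFwd_one, hprod, hu j]
  have hloss0 : lossFun lam b u W₀ (fun _ => 1) = 0 := by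
    unfold lossFun
    simp [hnet, sqNorm]
  have hnonneg : ∀ (W : Fin ℓ → Matrix (Fin d) (Fin d) ℝ) (a : Fin ℓ → ℝ),
      0 ≤ lossFun lam b u W a := by
    intro W a
    have h1 : 0 ≤ ∑ j, sqNorm (netFwd W a (b j) - u j) :=
      Finset.sum_nonneg fun j _ => sqNorm_nonneg _
    have h2 : 0 ≤ lam / 2 * ∑ i, (a i - 1) ^ 2 :=
      mul_nonneg (by linarith) (Finset.sum_nonneg fun i _ => sq_nonneg _)
    exact add_nonneg h1 h2
  constructor
  · constructor
    · exact ⟨W₀, fun _ => 1, hW₀mem, hloss0⟩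
    · rintro v ⟨W, a, _, rfl⟩
      exact hnonneg W a
  · intro W a hmem hopt
    have hle := hopt W₀ (fun _ => 1) hW₀mem
    rw [hloss0] at hle
    have hzero : lossFun lam b u W a = 0 := le_antisymm hle (hnonneg W a)
    have e : (∑ j, sqNorm (netFwd W a (b j) - u j))
        + lam / 2 * ∑ i, (a i - 1) ^ 2 = 0 := hzero
    have h1 : 0 ≤ ∑ j, sqNorm (netFwd W a (b j) - u j) :=
      Finset.sum_nonneg fun j _ => sqNorm_nonneg _
    have h2 : 0 ≤ ∑ i, (a i - 1) ^ 2 := Finset.sum_nonneg fun i _ => sq_nonneg _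
    have h2' : 0 ≤ lam / 2 * ∑ i, (a i - 1) ^ 2 := mul_nonneg (by linarith) h2
    have hb1 : ∑ j, sqNorm (netFwd W a (b j) - u j) = 0 := by linarith
    have hb2 : lam / 2 * ∑ i, (a i - 1) ^ 2 = 0 := by linarith
    have hsum2 : ∑ i, (a i - 1) ^ 2 = 0 := by
      rcases mul_eq_zero.mp hb2 with h | h
      · linarith
      · exact h
    have hai : ∀ i, a i = 1 := by
      intro i
      have hz := (Finset.sum_eq_zero_iff_of_nonneg (fun i _ => sq_nonneg (a i - 1))).mp
        hsum2 i (Finset.mem_univ i)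
      have := pow_eq_zero_iff (n := 2) (by norm_num) |>.mp hz
      linarith
    have hnetj : ∀ j, netFwd W a (b j) = u j := by
      intro j
      have hsq : sqNorm (netFwd W a (b j) - u j) = 0 :=
        (Finset.sum_eq_zero_iff_of_nonneg (fun j _ => sqNorm_nonneg _)).mp hb1 j
          (Finset.mem_univ j)
      exact sub_eq_zero.mp (sqNorm_eq_zero hsq)
    have haa : a = fun _ => 1 := funext hai
    refine ⟨hai, ?_, hnetj⟩
    intro j
    rw [← netFwd_one W (b j), ← haa]
    exact hnetj j
end
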